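/- Let f : (a, b) → ℝ be convex. Then for every x ∈ (a, b), f'₋(x) ≤ f^♮(x) ≤ f'₊(x), where f^♮ is the specular derivative of f. -/
import Mathlib


open Set

noncomputable def A (α β : ℝ) : ℝ :=
  (α * β - 1 + Real.sqrt ((α ^ 2 + 1) * (β ^ 2 + 1))) / (α + β)

/-- `f` is specularly differentiable at `x`: both one-sided derivatives exist. -/
def SpecularDifferentiableAt (f : ℝ → ℝ) (x : ℝ) : Prop :=
  DifferentiableWithinAt ℝ f (Ici x) x ∧ DifferentiableWithinAt ℝ f (Iic x) x

/-- The specular derivative of `f` at `x`, in terms of the right-hand derivative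
`α = f'₊(x)` and the left-hand derivative `β = f'₋(x)`. -/
noncomputable def specDeriv (f : ℝ → ℝ) (x : ℝ) : ℝ :=
  let α := derivWithin f (Ici x) x
  let β := derivWithin f (Iic x) x
  if α + β = 0 then 0 else A α β

private lemma sqrt_mul_le' {u v : ℝ} (hu : 0 ≤ u) (huv : u ≤ v) :
    u ≤ Real.sqrt (v * u) ∧ Real.sqrt (v * u) ≤ v := by
  have hv : 0 ≤ v := hu.trans huv
  constructor
  · have : u * u ≤ v * u := mul_le_mul_of_nonneg_right huv hu
    calc u = Real.sqrt (u * u) := by rw [Real.sqrt_mul_self hu]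
    _ ≤ Real.sqrt (v * u) := Real.sqrt_le_sqrt this
  · have : v * u ≤ v * v := mul_le_mul_of_nonneg_left huv hv
    calc Real.sqrt (v * u) ≤ Real.sqrt (v * v) := Real.sqrt_le_sqrt this
    _ = v := Real.sqrt_mul_self hv

lemma A_between' {α β : ℝ} (h : β ≤ α) (hne : α + β ≠ 0) :
    β ≤ A α β ∧ A α β ≤ α := by
  unfold A
  rcases lt_or_gt_of_ne hne with hneg | hpos
  · have hsq : α ^ 2 ≤ β ^ 2 := by nlinarith [mul_nonneg (sub_nonneg.2 h) (neg_nonneg.2 hneg.le)]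
    have hb := sqrt_mul_le' (by positivity : (0:ℝ) ≤ α ^ 2 + 1) (by linarith : α ^ 2 + 1 ≤ β ^ 2 + 1)
    rw [mul_comm] at hb
    constructor
    · rw [le_div_iff_of_neg hneg]; nlinarith [hb.2]
    · rw [div_le_iff_of_neg hneg]; nlinarith [hb.1]
  · have hsq : β ^ 2 ≤ α ^ 2 := by nlinarith [mul_nonneg (sub_nonneg.2 h) hpos.le]
    have hb := sqrt_mul_le' (by positivity : (0:ℝ) ≤ β ^ 2 + 1) (by linarith : β ^ 2 + 1 ≤ α ^ 2 + 1)
    constructor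
    · rw [le_div_iff₀ hpos]; nlinarith [hb.1]
    · rw [div_le_iff₀ hpos]; nlinarith [hb.2]

lemma convex_onesided_derivs {f : ℝ → ℝ} {a b x : ℝ} (hf : ConvexOn ℝ (Ioo a b) f)
    (hx : x ∈ Ioo a b) :
    derivWithin f (Iic x) x ≤ derivWithin f (Ici x) x := by
  have hax := hx.1
  have hxb := hx.2
  have mono : MonotoneOn (slope f x) (Ioo a b \ {x}) := hf.slope_mono hx
  have hsubL : Ioo a x ⊆ Ioo a b \ {x} := fun y hy =>
    ⟨⟨hy.1, hy.2.trans hxb⟩, ne_of_lt hy.2⟩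
  have hsubR : Ioo x b ⊆ Ioo a b \ {x} := fun y hy =>
    ⟨⟨hax.trans hy.1, hy.2⟩, ne_of_gt hy.1⟩
  have hneL : (Ioo a x).Nonempty := nonempty_Ioo.2 hax
  have hneR : (Ioo x b).Nonempty := nonempty_Ioo.2 hxb
  obtain ⟨c, hc⟩ := id hneL
  obtain ⟨d, hd⟩ := id hneR
  -- cross bound : slopes on the left are ≤ slopes on the right
  have cross : ∀ y ∈ Ioo a x, ∀ z ∈ Ioo x b, slope f x y ≤ slope f x z := fun y hy z hz =>
    mono (hsubL hy) (hsubR hz) (hy.2.trans hz.1).le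
  set β₀ := sSup (slope f x '' Ioo a x) with hβ₀
  set α₀ := sInf (slope f x '' Ioo x b) with hα₀
  have hbddR : BddBelow (slope f x '' Ioo x b) :=
    ⟨slope f x c, fun u ⟨z, hz, hzu⟩ => hzu ▸ cross c hc z hz⟩
  have hbddL : BddAbove (slope f x '' Ioo a x) :=
    ⟨slope f x d, fun u ⟨y, hy, hyu⟩ => hyu ▸ cross y hy d hd⟩
  have tR : Filter.Tendsto (slope f x) (nhdsWithin x (Ioi x)) (nhds α₀) :=
    MonotoneOn.tendsto_nhdsWithin_Ioo_right hneR (mono.mono hsubR) hbddR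
  have tL : Filter.Tendsto (slope f x) (nhdsWithin x (Iio x)) (nhds β₀) :=
    MonotoneOn.tendsto_nhdsWithin_Ioo_left hneL (mono.mono hsubL) hbddL
  have hR : HasDerivWithinAt f α₀ (Ici x) x := by
    rw [hasDerivWithinAt_iff_tendsto_slope, Ici_sdiff_left]; exact tR
  have hL : HasDerivWithinAt f β₀ (Iic x) x := by
    rw [hasDerivWithinAt_iff_tendsto_slope, Iic_diff_right]; exact tL
  rw [hR.derivWithin (uniqueDiffOn_Ici x x Set.self_mem_Ici),
    hL.derivWithin (uniqueDiffOn_Iic x x Set.self_mem_Iic)]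
  refine csSup_le (hneL.image _) ?_
  rintro u ⟨y, hy, rfl⟩
  refine le_csInf (hneR.image _) ?_
  rintro v ⟨z, hz, rfl⟩
  exact cross y hy z hz

theorem specDeriv_between_onesided (f : ℝ → ℝ) (a b : ℝ)
    (hf : ConvexOn ℝ (Ioo a b) f) :
    ∀ x ∈ Ioo a b,
      derivWithin f (Iic x) x ≤ specDeriv f x ∧
        specDeriv f x ≤ derivWithin f (Ici x) x := by
  intro x hx
  have h := convex_onesided_derivs hf hx
  simp only [specDeriv]
  split_ifs with h0
  · constructor <;> linarith
  · exact ⟨(A_between' h h0).1, (A_between' h h0).2⟩
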